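/- Weak call-by-value reduction satisfies the one-step diamond property: if M →v N and M →v L with N ≠ L, then there exists P such that N →v P and L →v P. -/
import Mathlib


/-- Pure untyped λ-terms with named variables. -/
inductive Tm : Type
  | var : ℕ → Tm
  | lam : ℕ → Tm → Tm
  | app : Tm → Tm → Tm
deriving DecidableEq

namespace Tm

/-- Free variables. -/
def fv : Tm → Finset ℕ
  | var x => {x}
  | lam x M => fv M \ {x}
  | app M N => fv M ∪ fv N

/-- A term is closed when it has no free variables. -/
def Closed (M : Tm) : Prop := fv M = ∅

/-- Values: variables and abstractions. -/
def IsValue : Tm → Prop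
  | var _ => True
  | lam _ _ => True
  | app _ _ => False

/-- (Naive) substitution `M{N/x}`. -/
def subst : Tm → ℕ → Tm → Tm
  | var y, x, N => if y = x then N else var y
  | lam y P, x, N => if y = x then lam y P else lam y (subst P x N)
  | app P Q, x, N => app (subst P x N) (subst Q x N)

/-- Weak call-by-value reduction: β-redexes whose argument is a value,
closed under both application contexts, never under λ. -/
inductive Cbv : Tm → Tm → Prop
  | beta {x M V} : IsValue V → Cbv (app (lam x M) V) (subst M x V)
  | appL {M N L} : Cbv M N → Cbv (app M L) (app N L)
  | appR {M N L} : Cbv M N → Cbv (app L M) (app L N)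

/-- The subterm relation on λ-terms. -/
inductive Sub : Tm → Tm → Prop
  | refl (M) : Sub M M
  | lam {M N x} : Sub M N → Sub M (lam x N)
  | appL {M N L} : Sub M N → Sub M (app N L)
  | appR {M N L} : Sub M L → Sub M (app N L)

end Tm

/-- `M N₁ … Nₖ` (left-nested application). -/
def appList : Tm → List Tm → Tm := List.foldl Tm.app

/-- `λx₁.…λxₖ.M`. -/
def lams : List ℕ → Tm → Tm := fun xs M => xs.foldr Tm.lam M

/-- `stepsN R n a b`: `a` reduces to `b` in exactly `n` `R`-steps. -/
def stepsN {α : Type*} (R : α → α → Prop) : ℕ → α → α → Prop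
  | 0, a, b => a = b
  | n + 1, a, b => ∃ c, R a c ∧ stepsN R n c b

/-- `a` is an `R`-normal form. -/
def NormalForm {α : Type*} (R : α → α → Prop) (a : α) : Prop := ¬ ∃ b, R a b

lemma value_no_step {V N : Tm} (hV : V.IsValue) : ¬ Tm.Cbv V N := by
  intro h; cases h <;> exact hV

/-- the one-step diamond property for weak CBV reduction. -/
theorem cbv_diamond (M N L : Tm) (h₁ : Tm.Cbv M N) (h₂ : Tm.Cbv M L) (hne : N ≠ L) :
    ∃ P, Tm.Cbv N P ∧ Tm.Cbv L P := by
  induction h₁ generalizing L with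
  | @beta x M V hV =>
    cases h₂ with
    | beta hV' => exact absurd rfl hne
    | appL h => exact absurd h (value_no_step trivial)
    | appR h => exact absurd h (value_no_step hV)
  | @appL M N K h ih =>
    cases h₂ with
    | beta hV' => exact absurd h (value_no_step trivial)
    | appL h' =>
      obtain ⟨P, hP1, hP2⟩ := ih _ h' (fun e => hne (by rw [e]))
      exact ⟨Tm.app P K, Tm.Cbv.appL hP1, Tm.Cbv.appL hP2⟩
    | appR h' =>
      exact ⟨_, Tm.Cbv.appR h', Tm.Cbv.appL h⟩
  | @appR M N K h ih =>
    cases h₂ with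
    | beta hV' => exact absurd h (value_no_step hV')
    | appL h' =>
      exact ⟨_, Tm.Cbv.appL h', Tm.Cbv.appR h⟩
    | appR h' =>
      obtain ⟨P, hP1, hP2⟩ := ih _ h' (fun e => hne (by rw [e]))
      exact ⟨Tm.app K P, Tm.Cbv.appR hP1, Tm.Cbv.appR hP2⟩
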